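/- In dimension 1, let 0 < a < b and 1 ≤ p ≤ q with 1/q − 1/p + α ≥ 0, 0 ≤ α < 1. Define on ℝ⁺ the weights u(x) = 1 on (0,1), u = n^q on (1+(n−1)a+(n−1)b, 1+(n−1)a+(n−1)b+(b−a)/2), u = n^{−q} on the rest of the n-th block, and v(x) = 1 on (0,1+b), v = n^p on (1+(n−2)a+(n−1)b, 1+(n−1)a+nb−(b−a)/2), v = n^{−p} on (1+(n−1)a+nb−(b−a)/2, 1+(n−1)a+nb), extended evenly to ℝ. Then [u,v]_{𝔄^a_{p,q,α}} ≤ a^{1/q−1/p+α} < ∞ while [u,v]_{𝔄^b_{p,q,α}} = ∞. -/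

import Mathlib

open MeasureTheory ENNReal Set

noncomputable section

def pconj (p : ℝ) : ℝ := p / (p - 1)

/-- The weight `u`: `1` on `(0,1)`, `n^q` on the first `(b-a)/2` of the `n`-th block
`(1+(n-1)(a+b), 1+n(a+b))`, and `n^{-q}` on the rest, extended evenly to `ℝ`. -/
def uW (a b q : ℝ) (x : ℝ) : ℝ≥0∞ :=
  if |x| ≤ 1 then 1 else
    let n : ℕ := ⌈(|x| - 1) / (a + b)⌉₊
    if |x| ≤ 1 + ((n : ℝ) - 1) * (a + b) + (b - a)/2 then (n : ℝ≥0∞) ^ q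
    else (n : ℝ≥0∞) ^ (-q)

/-- The weight `v`: `1` on `(0,1+b)`, `n^p` on
`(1+(n-2)a+(n-1)b, 1+(n-1)a+nb-(b-a)/2)` and `n^{-p}` on
`(1+(n-1)a+nb-(b-a)/2, 1+(n-1)a+nb)` for `n ≥ 2`, extended evenly to `ℝ`. -/
def vW (a b p : ℝ) (x : ℝ) : ℝ≥0∞ :=
  if |x| ≤ 1 + b then 1 else
    let n : ℕ := ⌈(|x| - 1 - b) / (a + b)⌉₊ + 1
    if |x| ≤ 1 + ((n : ℝ) - 1) * a + (n : ℝ) * b - (b - a)/2 then (n : ℝ≥0∞) ^ p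
    else (n : ℝ≥0∞) ^ (-p)

/-- The constant `[u,v]_{𝔄^c_{p,q,α}}`: supremum over intervals of length `≤ c` of
`ℓ(Q)^{α-1} (∫_Q u dx)^{1/q} (∫_Q v^{1-p'} dx)^{1/p'}` (Lebesgue measure, `d = 1`). -/
def frakA (c p q α : ℝ) (u v : ℝ → ℝ≥0∞) : ℝ≥0∞ :=
  ⨆ (x0 : ℝ) (l : ℝ) (_ : 0 < l ∧ l ≤ c),
    ENNReal.ofReal (l ^ (α - 1)) *
    (∫⁻ x in Set.Ioo x0 (x0 + l), u x) ^ (1/q) *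
    (∫⁻ x in Set.Ioo x0 (x0 + l), v x ^ (1 - pconj p)) ^ (1/(pconj p))

/-!
On an interval of length `≤ a` the weights cannot be large and small "against each other": if `u`
exceeds `1` somewhere, the interval lies where `u ≤ n^q` and `v = n^p`; if `v` drops below `1`
somewhere, it lies where `u = n^{-q}` and `v ≥ n^{-p}`; otherwise `u ≤ 1 ≤ v`. In each case
`(sup u)^{1/q} (sup v^{1-p'})^{1/p'} ≤ 1`, which bounds the `𝔄^a` constant by `a^{1/q-1/p+α}`.
An interval of length `b` starting at the `n`-th block meets both the part where `u = n^q` and the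
part where `v^{1-p'} = n^{p'}`, each of length `(b-a)/2`, so its contribution grows like `n²`.
-/

lemma holderConjugate_pconj {p : ℝ} (hp : 1 < p) : p.HolderConjugate (pconj p) :=
  .conjExponent hp

lemma mul_one_sub_pconj {p : ℝ} (hp : 1 < p) : p * (1 - pconj p) = -pconj p := by
  linear_combination -(holderConjugate_pconj hp).mul_eq_add

lemma one_div_pconj {p : ℝ} (hp : 1 < p) : 1 / pconj p = 1 - 1 / p := by
  rw [one_div, one_div, (holderConjugate_pconj hp).one_sub_inv]

namespace ENNReal

lemma rpow_le_rpow_of_nonpos {x y : ℝ≥0∞} {z : ℝ} (hxy : x ≤ y) (hz : z ≤ 0) :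
    y ^ z ≤ x ^ z := by
  rw [← neg_neg z, rpow_neg y, rpow_neg x]
  exact ENNReal.inv_le_inv.2 (rpow_le_rpow hxy (neg_nonneg.2 hz))

lemma one_le_natCast_rpow {n : ℕ} (hn : 1 ≤ n) {s : ℝ} (hs : 0 ≤ s) : 1 ≤ (n : ℝ≥0∞) ^ s :=
  one_rpow s ▸ rpow_le_rpow (by exact_mod_cast hn) hs

lemma natCast_rpow_neg_le_one {n : ℕ} (hn : 1 ≤ n) {s : ℝ} (hs : 0 ≤ s) :
    (n : ℝ≥0∞) ^ (-s) ≤ 1 := by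
  rw [rpow_neg]
  exact ENNReal.inv_le_one.2 (one_le_natCast_rpow hn hs)

lemma rpow_mul_rpow_one_div (x y : ℝ≥0∞) {s : ℝ} (hs : 0 < s) :
    (x ^ s * y) ^ (1 / s) = x * y ^ (1 / s) := by
  rw [mul_rpow_of_nonneg _ _ (one_div_nonneg.2 hs.le), one_div, rpow_rpow_inv hs.ne']

lemma rpow_rpow_one_div_mul_rpow_neg_rpow_one_div {x : ℝ≥0∞} (hx₀ : x ≠ 0) (hx : x ≠ ⊤)
    {s t : ℝ} (hs : s ≠ 0) (ht : t ≠ 0) : (x ^ s) ^ (1 / s) * (x ^ (-t)) ^ (1 / t) = 1 := by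
  rw [← rpow_mul, ← rpow_mul, mul_one_div_cancel hs, neg_mul, mul_one_div_cancel ht,
    rpow_one, rpow_neg_one, ENNReal.mul_inv_cancel hx₀ hx]

end ENNReal

section Integrals

variable {f : ℝ → ℝ≥0∞} {M : ℝ≥0∞}

lemma setLIntegral_Ioo_le {x₀ l : ℝ} (hf : ∀ x ∈ Ioo x₀ (x₀ + l), f x ≤ M) :
    ∫⁻ x in Ioo x₀ (x₀ + l), f x ≤ M * ENNReal.ofReal l :=
  calc ∫⁻ x in Ioo x₀ (x₀ + l), f x ≤ ∫⁻ _ in Ioo x₀ (x₀ + l), M :=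
        setLIntegral_mono' measurableSet_Ioo hf
    _ = M * ENNReal.ofReal l := by rw [setLIntegral_const, Real.volume_Ioo, add_sub_cancel_left]

lemma mul_ofReal_le_setLIntegral {s : Set ℝ} {y r : ℝ} (hs : Ioo y (y + r) ⊆ s)
    (hf : ∀ x ∈ Ioo y (y + r), M ≤ f x) : M * ENNReal.ofReal r ≤ ∫⁻ x in s, f x :=
  calc M * ENNReal.ofReal r = ∫⁻ _ in Ioo y (y + r), M := by
        rw [setLIntegral_const, Real.volume_Ioo, add_sub_cancel_left]
    _ ≤ ∫⁻ x in Ioo y (y + r), f x := setLIntegral_mono' measurableSet_Ioo hf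
    _ ≤ ∫⁻ x in s, f x := lintegral_mono_set hs

end Integrals

section FrakA

variable {c p q α : ℝ} {u v : ℝ → ℝ≥0∞}

lemma le_frakA {x₀ l : ℝ} (hl : 0 < l) (hlc : l ≤ c) :
    ENNReal.ofReal (l ^ (α - 1)) * (∫⁻ x in Ioo x₀ (x₀ + l), u x) ^ (1 / q) *
      (∫⁻ x in Ioo x₀ (x₀ + l), v x ^ (1 - pconj p)) ^ (1 / pconj p) ≤ frakA c p q α u v :=
  le_iSup₂_of_le x₀ l (le_iSup_of_le ⟨hl, hlc⟩ le_rfl)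

lemma frakA_le_of_forall_exists_bounds (hp : 1 < p) (hq : 0 < q) (hexp : 0 ≤ 1 / q - 1 / p + α)
    (h : ∀ x₀ l : ℝ, l ≤ c → ∃ M K : ℝ≥0∞, (∀ x ∈ Ioo x₀ (x₀ + l), u x ≤ M) ∧
      (∀ x ∈ Ioo x₀ (x₀ + l), v x ^ (1 - pconj p) ≤ K) ∧ M ^ (1 / q) * K ^ (1 / pconj p) ≤ 1) :
    frakA c p q α u v ≤ ENNReal.ofReal (c ^ (1 / q - 1 / p + α)) := by
  refine iSup₂_le fun x₀ l => iSup_le fun ⟨hl, hlc⟩ => ?_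
  obtain ⟨M, K, hM, hK, hMK⟩ := h x₀ l hlc
  have hq' : 0 ≤ 1 / q := one_div_nonneg.2 hq.le
  have hp' : 0 ≤ 1 / pconj p := (holderConjugate_pconj hp).symm.one_div_nonneg
  have hl' : ∀ s : ℝ, ENNReal.ofReal l ^ s = ENNReal.ofReal (l ^ s) :=
    fun s => ENNReal.ofReal_rpow_of_pos hl
  calc ENNReal.ofReal (l ^ (α - 1)) * (∫⁻ x in Ioo x₀ (x₀ + l), u x) ^ (1 / q) *
        (∫⁻ x in Ioo x₀ (x₀ + l), v x ^ (1 - pconj p)) ^ (1 / pconj p)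
      ≤ ENNReal.ofReal (l ^ (α - 1)) * (M * ENNReal.ofReal l) ^ (1 / q) *
          (K * ENNReal.ofReal l) ^ (1 / pconj p) := by
        gcongr
        exacts [setLIntegral_Ioo_le hM, setLIntegral_Ioo_le hK]
    _ = M ^ (1 / q) * K ^ (1 / pconj p) *
          ENNReal.ofReal (l ^ (α - 1) * l ^ (1 / q) * l ^ (1 / pconj p)) := by
        rw [ENNReal.mul_rpow_of_nonneg _ _ hq', ENNReal.mul_rpow_of_nonneg _ _ hp', hl', hl',
          ENNReal.ofReal_mul (by positivity), ENNReal.ofReal_mul (by positivity)]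
        ring
    _ ≤ 1 * ENNReal.ofReal (l ^ (1 / q - 1 / p + α)) := by
        have hexp_sum : α - 1 + 1 / q + 1 / pconj p = 1 / q - 1 / p + α := by
          rw [one_div_pconj hp]; ring
        rw [← Real.rpow_add hl, ← Real.rpow_add hl, hexp_sum]
        exact mul_le_mul_left hMK _
    _ ≤ ENNReal.ofReal (c ^ (1 / q - 1 / p + α)) := by
        rw [one_mul]
        exact ENNReal.ofReal_le_ofReal (Real.rpow_le_rpow hl.le hlc hexp)

end FrakA

lemma Nat.ceil_div_eq_of_lt_of_le {s t h : ℝ} (hh : 0 < h) {n : ℕ} (h₁ : s + ((n : ℝ) - 1) * h < t)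
    (h₂ : t ≤ s + n * h) : ⌈(t - s) / h⌉₊ = n := by
  rcases n with _ | m
  · exact Nat.ceil_eq_zero.2 (div_nonpos_of_nonpos_of_nonneg (by push_cast at h₂; linarith) hh.le)
  · rw [Nat.ceil_eq_iff m.succ_ne_zero, Nat.succ_sub_one, lt_div_iff₀ hh, div_le_iff₀ hh]
    push_cast at h₁ h₂ ⊢
    constructor <;> linarith

/-- `x_n = 1 + (n-1)(a+b)`: the `n`-th block of `u` is `(x_n, x_n + a + b]`; there `u` is large on
`(x_n, x_n + (b-a)/2]`, while `v` is large on `(x_n - a, x_n + (a+b)/2]` and small on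
`(x_n + (a+b)/2, x_n + b]`. -/
def blockStart (a b : ℝ) (n : ℕ) : ℝ := 1 + ((n : ℝ) - 1) * (a + b)

section Blocks

variable {a b p q : ℝ}

lemma blockStart_succ (a b : ℝ) (n : ℕ) : blockStart a b (n + 1) = blockStart a b n + (a + b) := by
  simp only [blockStart]; push_cast; ring

lemma blockStart_lt_blockStart_iff (hab : 0 < a + b) {m n : ℕ} :
    blockStart a b m < blockStart a b n ↔ m < n := by
  simp only [blockStart, add_lt_add_iff_left, mul_lt_mul_iff_left₀ hab, sub_lt_sub_iff_right,
    Nat.cast_lt]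

lemma one_le_blockStart (hab : 0 < a + b) {n : ℕ} (hn : 1 ≤ n) : 1 ≤ blockStart a b n := by
  have : (1 : ℝ) ≤ n := by exact_mod_cast hn
  simp only [blockStart]; nlinarith

lemma exists_blockStart_lt_le (hab : 0 < a + b) {t : ℝ} (ht : 1 < t) :
    ∃ n : ℕ, 1 ≤ n ∧ blockStart a b n < t ∧ t ≤ blockStart a b n + (a + b) := by
  set n := ⌈(t - 1) / (a + b)⌉₊
  have hpos : 0 < (t - 1) / (a + b) := div_pos (by linarith) hab
  have hlt : (n : ℝ) < (t - 1) / (a + b) + 1 := Nat.ceil_lt_add_one hpos.le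
  have hle : (t - 1) / (a + b) ≤ n := Nat.le_ceil _
  rw [← sub_lt_iff_lt_add, lt_div_iff₀ hab] at hlt
  rw [div_le_iff₀ hab] at hle
  refine ⟨n, Nat.one_le_ceil_iff.2 hpos, ?_, ?_⟩ <;> simp only [blockStart] <;> linarith

lemma uW_eq_ite (hab : 0 < a + b) {x : ℝ} {n : ℕ} (hn : 1 ≤ n) (h₁ : blockStart a b n < |x|)
    (h₂ : |x| ≤ blockStart a b n + (a + b)) :
    uW a b q x =
      if |x| ≤ blockStart a b n + (b - a) / 2 then (n : ℝ≥0∞) ^ q else (n : ℝ≥0∞) ^ (-q) := by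
  have hx : ¬ |x| ≤ 1 := by linarith [one_le_blockStart hab hn]
  have hn' : ⌈(|x| - 1) / (a + b)⌉₊ = n :=
    Nat.ceil_div_eq_of_lt_of_le hab h₁ (by simp only [blockStart] at h₂; linarith)
  simp only [uW, if_neg hx, hn', blockStart]
  rfl

lemma vW_eq_ite (hab : 0 < a + b) {x : ℝ} {n : ℕ} (hn : 2 ≤ n) (h₁ : blockStart a b n - a < |x|)
    (h₂ : |x| ≤ blockStart a b n + b) :
    vW a b p x =
      if |x| ≤ blockStart a b n + (a + b) / 2 then (n : ℝ≥0∞) ^ p else (n : ℝ≥0∞) ^ (-p) := by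
  obtain ⟨m, rfl⟩ : ∃ m, n = m + 1 := ⟨n - 1, by omega⟩
  rw [blockStart_succ] at h₁ h₂
  have hx : ¬ |x| ≤ 1 + b := by linarith [one_le_blockStart hab (n := m) (by omega)]
  have hm : ⌈(|x| - 1 - b) / (a + b)⌉₊ = m := by
    rw [sub_sub]
    exact Nat.ceil_div_eq_of_lt_of_le hab (by simp only [blockStart] at h₁; linarith)
      (by simp only [blockStart] at h₂; linarith)
  have hcond : 1 + ((↑(m + 1) : ℝ) - 1) * a + ↑(m + 1) * b - (b - a) / 2 =
      blockStart a b (m + 1) + (a + b) / 2 := by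
    simp only [blockStart]; push_cast; ring
  simp only [vW, if_neg hx, hm, hcond]

lemma exists_block_of_one_lt_uW (hab : 0 < a + b) (hq : 0 ≤ q) {x : ℝ} (hx : 1 < uW a b q x) :
    ∃ n : ℕ, 2 ≤ n ∧ blockStart a b n < |x| ∧ |x| ≤ blockStart a b n + (b - a) / 2 := by
  by_cases hx₁ : |x| ≤ 1
  · simp [uW, hx₁] at hx
  obtain ⟨n, hn, h₁, h₂⟩ := exists_blockStart_lt_le hab (not_le.1 hx₁)
  rw [uW_eq_ite hab hn h₁ h₂] at hx
  split_ifs at hx with hbig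
  · refine ⟨n, ?_, h₁, hbig⟩
    by_contra hn₂
    obtain rfl : n = 1 := by omega
    simp at hx
  · exact absurd hx (not_lt.2 (ENNReal.natCast_rpow_neg_le_one hn hq))

lemma exists_block_of_vW_lt_one (hab : 0 < a + b) (hp : 0 ≤ p) {x : ℝ} (hx : vW a b p x < 1) :
    ∃ n : ℕ, 2 ≤ n ∧ blockStart a b n + (a + b) / 2 < |x| ∧ |x| ≤ blockStart a b n + b := by
  by_cases hx₁ : |x| ≤ 1 + b
  · simp [vW, hx₁] at hx
  obtain ⟨m, hm, h₁, h₂⟩ := exists_blockStart_lt_le hab (t := |x| - b) (by linarith)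
  have h₁' : blockStart a b (m + 1) - a < |x| := by rw [blockStart_succ]; linarith
  have h₂' : |x| ≤ blockStart a b (m + 1) + b := by rw [blockStart_succ]; linarith
  rw [vW_eq_ite hab (by omega) h₁' h₂'] at hx
  split_ifs at hx with hbig
  · exact absurd hx (not_lt.2 (ENNReal.one_le_natCast_rpow (by omega) hp))
  · exact ⟨m + 1, by omega, not_le.1 hbig, h₂'⟩

lemma uW_le_natCast_rpow (hab : 0 < a + b) (hq : 0 ≤ q) {x : ℝ} {N : ℕ} (hN : 1 ≤ N)
    (hx : |x| ≤ blockStart a b N + (a + b)) : uW a b q x ≤ (N : ℝ≥0∞) ^ q := by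
  by_cases hx₁ : |x| ≤ 1
  · simpa [uW, hx₁] using ENNReal.one_le_natCast_rpow hN hq
  obtain ⟨m, hm, h₁, h₂⟩ := exists_blockStart_lt_le hab (not_le.1 hx₁)
  have hmN : m ≤ N := Nat.lt_succ_iff.1 <|
    (blockStart_lt_blockStart_iff hab).1 (by rw [blockStart_succ]; linarith)
  rw [uW_eq_ite hab hm h₁ h₂]
  split_ifs
  · exact ENNReal.rpow_le_rpow (by exact_mod_cast hmN) hq
  · exact (ENNReal.natCast_rpow_neg_le_one hm hq).trans (ENNReal.one_le_natCast_rpow hN hq)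

lemma natCast_rpow_neg_le_vW (hab : 0 < a + b) (hb : 0 ≤ b) (hp : 0 ≤ p) {x : ℝ} {n : ℕ}
    (hn : 2 ≤ n) (h₁ : blockStart a b n + (b - a) / 2 < |x|)
    (h₂ : |x| < blockStart a b n + (a + b)) : (n : ℝ≥0∞) ^ (-p) ≤ vW a b p x := by
  have hsmall : (n : ℝ≥0∞) ^ (-p) ≤ 1 := ENNReal.natCast_rpow_neg_le_one (by omega) hp
  by_cases hx : |x| ≤ blockStart a b n + b
  · rw [vW_eq_ite hab hn (by linarith) hx]
    split_ifs
    exacts [hsmall.trans (ENNReal.one_le_natCast_rpow (by omega) hp), le_rfl]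
  · have h₁' : blockStart a b (n + 1) - a < |x| := by rw [blockStart_succ]; linarith
    have h₂' : |x| ≤ blockStart a b (n + 1) + (a + b) / 2 := by rw [blockStart_succ]; linarith
    rw [vW_eq_ite hab (by omega) h₁' (by linarith [blockStart_succ a b n]), if_pos h₂']
    exact hsmall.trans (ENNReal.one_le_natCast_rpow (by omega) hp)

end Blocks

lemma abs_lt_abs_add_of_mem_Ioo {x₀ l a x y : ℝ} (hx : x ∈ Ioo x₀ (x₀ + l))
    (hy : y ∈ Ioo x₀ (x₀ + l)) (hla : l ≤ a) : |x| < |y| + a := by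
  have := abs_sub_abs_le_abs_sub x y
  have := abs_sub_lt_iff.2 (⟨by linarith [hx.2, hy.1], by linarith [hx.1, hy.2]⟩ :
    x - y < l ∧ y - x < l)
  linarith

section Weights

variable {a b p q : ℝ}

lemma exists_bounds_uW_vW (ha : 0 < a) (hab : a < b) (hp : 1 < p) (hq : 0 < q) {x₀ l : ℝ}
    (hla : l ≤ a) :
    ∃ M K : ℝ≥0∞, (∀ x ∈ Ioo x₀ (x₀ + l), uW a b q x ≤ M) ∧
      (∀ x ∈ Ioo x₀ (x₀ + l), vW a b p x ^ (1 - pconj p) ≤ K) ∧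
      M ^ (1 / q) * K ^ (1 / pconj p) ≤ 1 := by
  have hab' : 0 < a + b := by linarith
  have hp' : 1 - pconj p ≤ 0 := by linarith [(holderConjugate_pconj hp).symm.lt]
  have hclose : ∀ x ∈ Ioo x₀ (x₀ + l), ∀ y ∈ Ioo x₀ (x₀ + l), |x| < |y| + a :=
    fun x hx y hy => abs_lt_abs_add_of_mem_Ioo hx hy hla
  by_cases hu : ∃ y ∈ Ioo x₀ (x₀ + l), 1 < uW a b q y
  · obtain ⟨y, hy, huy⟩ := hu
    obtain ⟨n, hn, h₁, h₂⟩ := exists_block_of_one_lt_uW hab' hq.le huy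
    refine ⟨(n : ℝ≥0∞) ^ q, (n : ℝ≥0∞) ^ (-pconj p), fun x hx => ?_, fun x hx => ?_, ?_⟩
    · exact uW_le_natCast_rpow hab' hq.le (by omega) (by linarith [hclose x hx y hy])
    · have := hclose x hx y hy
      have := hclose y hy x hx
      rw [vW_eq_ite hab' hn (by linarith) (by linarith), if_pos (by linarith), ← ENNReal.rpow_mul,
        mul_one_sub_pconj hp]
    · exact (ENNReal.rpow_rpow_one_div_mul_rpow_neg_rpow_one_div (by simp; omega) (by simp)
        hq.ne' (holderConjugate_pconj hp).symm.ne_zero).le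
  by_cases hv : ∃ y ∈ Ioo x₀ (x₀ + l), vW a b p y < 1
  · obtain ⟨y, hy, hvy⟩ := hv
    obtain ⟨n, hn, h₁, h₂⟩ := exists_block_of_vW_lt_one hab' (by linarith) hvy
    refine ⟨(n : ℝ≥0∞) ^ (-q), (n : ℝ≥0∞) ^ pconj p, fun x hx => ?_, fun x hx => ?_, ?_⟩
    · have := hclose x hx y hy
      have := hclose y hy x hx
      rw [uW_eq_ite hab' (n := n) (by omega) (by linarith) (by linarith), if_neg (by linarith)]
    · have := hclose x hx y hy
      have := hclose y hy x hx
      calc vW a b p x ^ (1 - pconj p) ≤ ((n : ℝ≥0∞) ^ (-p)) ^ (1 - pconj p) :=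
            ENNReal.rpow_le_rpow_of_nonpos
              (natCast_rpow_neg_le_vW hab' (by linarith) (by linarith) hn (by linarith)
                (by linarith)) hp'
        _ = (n : ℝ≥0∞) ^ pconj p := by
          rw [← ENNReal.rpow_mul, neg_mul, mul_one_sub_pconj hp, neg_neg]
    · rw [mul_comm]
      exact (ENNReal.rpow_rpow_one_div_mul_rpow_neg_rpow_one_div (by simp; omega) (by simp)
        (holderConjugate_pconj hp).symm.ne_zero hq.ne').le
  push Not at hu hv
  refine ⟨1, 1, hu, fun x hx => ?_, by simp⟩
  simpa using ENNReal.rpow_le_rpow_of_nonpos (hv x hx) hp'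

lemma natCast_mul_le_frakA (ha : 0 < a) (hab : a < b) (hp : 1 < p) (hq : 0 < q) (α : ℝ) {n : ℕ}
    (hn : 2 ≤ n) :
    (n : ℝ≥0∞) * n * (ENNReal.ofReal (b ^ (α - 1)) * ENNReal.ofReal ((b - a) / 2) ^ (1 / q) *
      ENNReal.ofReal ((b - a) / 2) ^ (1 / pconj p)) ≤ frakA b p q α (uW a b q) (vW a b p) := by
  have hab' : 0 < a + b := by linarith
  have hp' : 0 < pconj p := (holderConjugate_pconj hp).symm.pos
  set x₀ := blockStart a b n
  have hx₀ : 0 < x₀ := by linarith [one_le_blockStart hab' (n := n) (by omega)]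
  have habs : ∀ x ∈ Ioo x₀ (x₀ + b), |x| = x := fun x hx => abs_of_pos (hx₀.trans hx.1)
  have hu : (n : ℝ≥0∞) ^ q * ENNReal.ofReal ((b - a) / 2) ≤ ∫⁻ x in Ioo x₀ (x₀ + b), uW a b q x :=
    mul_ofReal_le_setLIntegral (Ioo_subset_Ioo le_rfl (by linarith)) fun x hx => by
      have hx' : x ∈ Ioo x₀ (x₀ + b) := ⟨hx.1, by linarith [hx.2]⟩
      rw [uW_eq_ite hab' (n := n) (by omega) (by rw [habs x hx']; exact hx.1)
        (by rw [habs x hx']; linarith [hx.2]), if_pos (by rw [habs x hx']; exact hx.2.le)]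
  have hv : (n : ℝ≥0∞) ^ pconj p * ENNReal.ofReal ((b - a) / 2) ≤
      ∫⁻ x in Ioo x₀ (x₀ + b), vW a b p x ^ (1 - pconj p) :=
    mul_ofReal_le_setLIntegral (y := x₀ + (a + b) / 2)
      (Ioo_subset_Ioo (by linarith) (by linarith)) fun x hx => by
      have hx' : x ∈ Ioo x₀ (x₀ + b) := ⟨by linarith [hx.1], by linarith [hx.2]⟩
      rw [vW_eq_ite hab' hn (by rw [habs x hx']; linarith [hx.1])
        (by rw [habs x hx']; linarith [hx.2]), if_neg (by rw [habs x hx']; linarith [hx.1]),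
        ← ENNReal.rpow_mul, neg_mul, mul_one_sub_pconj hp, neg_neg]
  calc (n : ℝ≥0∞) * n * (ENNReal.ofReal (b ^ (α - 1)) * ENNReal.ofReal ((b - a) / 2) ^ (1 / q) *
        ENNReal.ofReal ((b - a) / 2) ^ (1 / pconj p))
      = ENNReal.ofReal (b ^ (α - 1)) * ((n : ℝ≥0∞) ^ q * ENNReal.ofReal ((b - a) / 2)) ^ (1 / q) *
          ((n : ℝ≥0∞) ^ pconj p * ENNReal.ofReal ((b - a) / 2)) ^ (1 / pconj p) := by
        rw [ENNReal.rpow_mul_rpow_one_div _ _ hq, ENNReal.rpow_mul_rpow_one_div _ _ hp']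
        ring
    _ ≤ frakA b p q α (uW a b q) (vW a b p) := by
        refine le_trans ?_ (le_frakA (x₀ := x₀) (by linarith) le_rfl)
        gcongr

lemma frakA_uW_vW_eq_top (ha : 0 < a) (hab : a < b) (hp : 1 < p) (hq : 0 < q) (α : ℝ) :
    frakA b p q α (uW a b q) (vW a b p) = ⊤ := by
  set C := ENNReal.ofReal (b ^ (α - 1)) * ENNReal.ofReal ((b - a) / 2) ^ (1 / q) *
    ENNReal.ofReal ((b - a) / 2) ^ (1 / pconj p)
  have hpos : 0 < ENNReal.ofReal ((b - a) / 2) := ENNReal.ofReal_pos.2 (by linarith)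
  have hC : C ≠ 0 := by
    refine mul_ne_zero (mul_ne_zero ?_ ?_) ?_
    · exact (ENNReal.ofReal_pos.2 (Real.rpow_pos_of_pos (ha.trans hab) _)).ne'
    all_goals exact (ENNReal.rpow_pos hpos ENNReal.ofReal_ne_top).ne'
  by_contra htop
  obtain ⟨n, hn⟩ := ENNReal.exists_nat_mul_gt hC htop
  refine (hn.trans_le ?_).false
  calc (n : ℝ≥0∞) * C ≤ ((n + 2 : ℕ) : ℝ≥0∞) * (n + 2 : ℕ) * C := by
        gcongr
        exact_mod_cast (by nlinarith : n ≤ (n + 2) * (n + 2))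
    _ ≤ frakA b p q α (uW a b q) (vW a b p) := natCast_mul_le_frakA ha hab hp hq α (by omega)

end Weights

theorem frakA_a_finite_b_infinite_general (a b p q α : ℝ) (ha : 0 < a) (hab : a < b)
    (hp : 1 < p) (hpq : p ≤ q)
    (hcond : 0 ≤ 1/q - 1/p + α) :
    frakA a p q α (uW a b q) (vW a b p) ≤ ENNReal.ofReal (a ^ (1/q - 1/p + α)) ∧
    frakA b p q α (uW a b q) (vW a b p) = ∞ := by
  have hq : 0 < q := by linarith
  exact ⟨frakA_le_of_forall_exists_bounds hp hq hcond fun _ _ hla =>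
      exists_bounds_uW_vW ha hab hp hq hla,
    frakA_uW_vW_eq_top ha hab hp hq α⟩

/-- The pair `(uW, vW)` satisfies `[u,v]_{𝔄^a_{p,q,α}} ≤ a^{1/q-1/p+α} < ∞` but
`[u,v]_{𝔄^b_{p,q,α}} = ∞`. -/
theorem frakA_a_finite_b_infinite (a b p q α : ℝ) (ha : 0 < a) (hab : a < b)
    (hp : 1 < p) (hpq : p ≤ q) (hα : 0 ≤ α) (hα1 : α < 1)
    (hcond : 0 ≤ 1/q - 1/p + α) :
    frakA a p q α (uW a b q) (vW a b p) ≤ ENNReal.ofReal (a ^ (1/q - 1/p + α)) ∧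
    frakA b p q α (uW a b q) (vW a b p) = ∞ :=
  frakA_a_finite_b_infinite_general a b p q α ha hab hp hpq hcond

end
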